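/- Let V = (ZMod 2)^n with n ≥ 1, let s ∈ V with s ≠ 0, let X be any type, and let f : V → X satisfy Simon's promise: for all x, y ∈ V, f(x) = f(y) if and only if x + y ∈ {0, s}. Then for every u ∈ V: (1/2^{2n}) Σ_{z ∈ range(f)} | Σ_{x : f(x) = z} (−1)^{x·u} |² equals 2^{1−n} if s·u = 0, and equals 0 if s·u = 1. -/

import Mathlib

open Matrix
open scoped ComplexOrder

/-- The real sign `(-1)^a` of an element `a : ZMod 2`. -/
def signOf (a : ZMod 2) : ℝ := if a = 0 then 1 else -1

/-!
Under Simon's promise every fibre of `f` is a coset `{x₀, x₀ + s}`, so the inner sum is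
`(-1)^(x₀·u) (1 + (-1)^(s·u))`, whose square is `4` or `0` according to `s·u`. There are
`2^n / 2` fibres, giving `2^(-2n) · 2^(n-1) · 4 = 2^(1-n)` in the first case.
-/

open Finset

lemma zmod_two_eq_zero_or_one (a : ZMod 2) : a = 0 ∨ a = 1 := by
  revert a; decide

lemma signOf_add (a b : ZMod 2) : signOf (a + b) = signOf a * signOf b := by
  obtain rfl | rfl := zmod_two_eq_zero_or_one a <;>
    obtain rfl | rfl := zmod_two_eq_zero_or_one b <;>
    simp [signOf, CharTwo.add_self_eq_zero]

lemma signOf_mul_self (a : ZMod 2) : signOf a * signOf a = 1 := by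
  obtain rfl | rfl := zmod_two_eq_zero_or_one a <;> simp [signOf]

section SimonPromise

variable {G X : Type*} [AddCommGroup G] [Module (ZMod 2) G] {f : G → X} {s : G}

lemma eq_iff_of_simon_promise (hf : ∀ x y, f x = f y ↔ (x + y = 0 ∨ x + y = s)) (x₀ x : G) :
    f x = f x₀ ↔ x = x₀ ∨ x = x₀ + s := by
  rw [hf, add_eq_zero_iff_eq_neg, ← eq_sub_iff_add_eq, sub_eq_add_neg, ZModModule.neg_eq_self,
    add_comm s]

variable [Fintype G] [DecidableEq G] [DecidableEq X]

lemma filter_eq_pair_of_simon_promise (hf : ∀ x y, f x = f y ↔ (x + y = 0 ∨ x + y = s))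
    (x₀ : G) : univ.filter (fun x => f x = f x₀) = {x₀, x₀ + s} := by
  ext x
  simp only [mem_filter, mem_univ, true_and, mem_insert, mem_singleton,
    eq_iff_of_simon_promise hf]

lemma card_image_mul_two_of_simon_promise (hs : s ≠ 0)
    (hf : ∀ x y, f x = f y ↔ (x + y = 0 ∨ x + y = s)) :
    #(univ.image f) * 2 = Fintype.card G := by
  have hfiber : ∀ z ∈ univ.image f, #(univ.filter fun x => f x = z) = 2 := by
    intro z hz
    obtain ⟨x₀, -, rfl⟩ := mem_image.mp hz
    rw [filter_eq_pair_of_simon_promise hf, card_pair]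
    simpa using hs
  rw [← card_univ, card_eq_sum_card_image f univ, sum_congr rfl hfiber, sum_const, smul_eq_mul]

end SimonPromise

lemma sq_sum_signOf_dotProduct_pair {ι : Type*} [Fintype ι] {s : ι → ZMod 2} (hs : s ≠ 0)
    (x₀ u : ι → ZMod 2) :
    (∑ x ∈ {x₀, x₀ + s}, signOf (x ⬝ᵥ u)) ^ 2 = if s ⬝ᵥ u = 0 then 4 else 0 := by
  have hsum : ∑ x ∈ {x₀, x₀ + s}, signOf (x ⬝ᵥ u) =
      signOf (x₀ ⬝ᵥ u) * (1 + signOf (s ⬝ᵥ u)) := by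
    rw [sum_pair (by simpa using hs), add_dotProduct, signOf_add, mul_add, mul_one]
  have hsq : signOf (x₀ ⬝ᵥ u) ^ 2 = 1 := by rw [sq, signOf_mul_self]
  rw [hsum, mul_pow, hsq, one_mul]
  split_ifs with h <;> norm_num [signOf, h]

theorem half_bqp_simons_measurement_distribution_general {X : Type*} [DecidableEq X]
    (n : ℕ) (s : Fin n → ZMod 2) (hs : s ≠ 0)
    (f : (Fin n → ZMod 2) → X)
    (hf : ∀ x y, f x = f y ↔ (x + y = 0 ∨ x + y = s))
    (u : Fin n → ZMod 2) :
    (1 / 2 ^ (2 * n)) *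
        ∑ z ∈ Finset.univ.image f,
          (∑ x ∈ Finset.univ.filter fun x => f x = z, signOf (x ⬝ᵥ u)) ^ 2 =
      if s ⬝ᵥ u = 0 then 2 / 2 ^ n else 0 := by
  have hfiber : ∀ z ∈ univ.image f,
      (∑ x ∈ univ.filter fun x => f x = z, signOf (x ⬝ᵥ u)) ^ 2 =
        if s ⬝ᵥ u = 0 then 4 else 0 := by
    intro z hz
    obtain ⟨x₀, -, rfl⟩ := mem_image.mp hz
    rw [filter_eq_pair_of_simon_promise hf, sq_sum_signOf_dotProduct_pair hs]
  have hcard : (#(univ.image f) : ℝ) * 2 = 2 ^ n := by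
    exact_mod_cast (card_image_mul_two_of_simon_promise hs hf).trans (by simp)
  rw [sum_congr rfl hfiber, sum_const, nsmul_eq_mul]
  split_ifs
  · rw [show (2 : ℝ) ^ (2 * n) = 2 ^ n * 2 ^ n by ring,
      show (#(univ.image f) : ℝ) * 4 = 2 * 2 ^ n by linear_combination 2 * hcard]
    field_simp
  · simp

theorem half_bqp_simons_measurement_distribution {X : Type*} [DecidableEq X]
    (n : ℕ) (hn : 1 ≤ n) (s : Fin n → ZMod 2) (hs : s ≠ 0)
    (f : (Fin n → ZMod 2) → X)
    (hf : ∀ x y, f x = f y ↔ (x + y = 0 ∨ x + y = s))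
    (u : Fin n → ZMod 2) :
    (1 / 2 ^ (2 * n)) *
        ∑ z ∈ Finset.univ.image f,
          (∑ x ∈ Finset.univ.filter fun x => f x = z, signOf (x ⬝ᵥ u)) ^ 2 =
      if s ⬝ᵥ u = 0 then 2 / 2 ^ n else 0 :=
  half_bqp_simons_measurement_distribution_general n s hs f hf u
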